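/- Let b, d, θ, η, m > 0, μ ∈ [0,1], α ∈ (0,1), let v ∈ C¹([0,1]) with v(0) = v(1) = 0, and let p ∈ L²((0,1)×(0,1)) with p ≥ 0 a.e. and ∫₀¹ p(x,y) dx = 1 for a.e. y. Assume θ/η > d/b. Suppose R ≥ 0 and n : [0,1] → ℝ is nonnegative and not identically zero, continuously differentiable with n'(0) = n'(1) = 0, n' has an integrable derivative g (i.e. n'(x) = n'(0) + ∫₀ˣ g(s) ds), and the steady-state equations hold: for a.e. x ∈ (0,1), 0 = χ_α(x)(bR − d)n(x) − μ b R χ_α(x) n(x) + μ b R ∫₀¹ χ_α(y) n(y) p(x,y) dy − (v n)'(x) + m g(x), and 0 = θ − η R − b R ∫₀¹ χ_α(x) n(x) dx. Then R = d/b and ∫₀¹ χ_α(x) n(x) dx = (θ − η d/b)/d > 0. -/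

import Mathlib

open MeasureTheory Set

/-- The indicator of the active region: `χ_α x = 1` if `x < α`, else `0`. -/
noncomputable def chi (α : ℝ) (x : ℝ) : ℝ := if x < α then 1 else 0

lemma chi_nonneg (α x : ℝ) : 0 ≤ chi α x := by unfold chi; split <;> norm_num

lemma chi_abs_le_one (α x : ℝ) : ‖chi α x‖ ≤ 1 := by
  unfold chi; split <;> simp

lemma chi_meas (α : ℝ) : Measurable (chi α) :=
  Measurable.ite measurableSet_Iio measurable_const measurable_const

/-- Above the threshold `θ/η > d/b`, any nontrivial nonnegative steady state `(n, R)`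
satisfies `R = d/b` and has active biomass `∫₀¹ χ_α n = (θ − ηd/b)/d > 0`. -/
theorem stmt_11 (b d θ η m μ α : ℝ)
    (hb : 0 < b) (hd : 0 < d) (hθ : 0 < θ) (hη : 0 < η) (hm : 0 < m)
    (hμ : μ ∈ Set.Icc (0:ℝ) 1) (hα : α ∈ Set.Ioo (0:ℝ) 1)
    (v v' : ℝ → ℝ)
    (hv : ∀ x ∈ Set.Icc (0:ℝ) 1, HasDerivWithinAt v (v' x) (Set.Icc 0 1) x)
    (hv'c : ContinuousOn v' (Set.Icc 0 1))
    (hv0 : v 0 = 0) (hv1 : v 1 = 0)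
    (p : ℝ × ℝ → ℝ)
    (hp : MemLp p 2 (volume.restrict ((Set.Ioo (0:ℝ) 1) ×ˢ (Set.Ioo (0:ℝ) 1))))
    (hp0 : ∀ᵐ z ∂(volume.restrict ((Set.Ioo (0:ℝ) 1) ×ˢ (Set.Ioo (0:ℝ) 1))), 0 ≤ p z)
    (hpnorm : ∀ᵐ y ∂(volume.restrict (Set.Ioo (0:ℝ) 1)),
      (∫ x in Set.Ioo (0:ℝ) 1, p (x, y)) = 1)
    (hthresh : d / b < θ / η)
    (R : ℝ) (hR : 0 ≤ R)
    (n n' g : ℝ → ℝ)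
    (hnpos : ∀ x ∈ Set.Icc (0:ℝ) 1, 0 ≤ n x)
    (hnnz : ∃ x ∈ Set.Icc (0:ℝ) 1, n x ≠ 0)
    (hn : ∀ x ∈ Set.Icc (0:ℝ) 1, HasDerivWithinAt n (n' x) (Set.Icc 0 1) x)
    (hn'c : ContinuousOn n' (Set.Icc 0 1))
    (hnb0 : n' 0 = 0) (hnb1 : n' 1 = 0)
    (hg : IntegrableOn g (Set.Ioo (0:ℝ) 1))
    (hac : ∀ x ∈ Set.Icc (0:ℝ) 1, n' x = n' 0 + ∫ s in (0:ℝ)..x, g s)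
    (hss_n : ∀ᵐ x ∂(volume.restrict (Set.Ioo (0:ℝ) 1)),
      0 = chi α x * (b * R - d) * n x - μ * b * R * chi α x * n x
          + μ * b * R * (∫ y in Set.Ioo (0:ℝ) 1, chi α y * n y * p (x, y))
          - (v' x * n x + v x * n' x) + m * g x)
    (hss_R : 0 = θ - η * R - b * R * ∫ x in Set.Ioo (0:ℝ) 1, chi α x * n x) :
    R = d / b ∧
    (∫ x in Set.Ioo (0:ℝ) 1, chi α x * n x) = (θ - η * (d / b)) / d ∧
    0 < (θ - η * (d / b)) / d := by
  obtain ⟨hα0, hα1⟩ := hα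
  have hIcc : Set.Ioo (0:ℝ) 1 ⊆ Set.Icc 0 1 := Set.Ioo_subset_Icc_self
  set S := Set.Ioo (0:ℝ) 1 with hS
  set I : ℝ := ∫ x in S, chi α x * n x with hIdef
  -- continuity
  have hnc : ContinuousOn n (Set.Icc 0 1) := fun x hx => (hn x hx).continuousWithinAt
  have hvc : ContinuousOn v (Set.Icc 0 1) := fun x hx => (hv x hx).continuousWithinAt
  -- basic integrabilities
  have hn_int : IntegrableOn n S := (hnc.integrableOn_Icc).mono_set hIcc
  have hchi_aesm : AEStronglyMeasurable (chi α) (volume.restrict S) :=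
    (chi_meas α).aestronglyMeasurable
  have hchin_int : IntegrableOn (fun x => chi α x * n x) S :=
    hn_int.bdd_mul hchi_aesm (Filter.Eventually.of_forall fun x => chi_abs_le_one α x)
  -- finite measure
  haveI hfin : IsFiniteMeasure (volume.restrict S) := by
    constructor
    rw [Measure.restrict_apply_univ, hS, Real.volume_Ioo]
    exact ENNReal.ofReal_lt_top
  -- product measure
  have hmeq : volume.restrict (S ×ˢ S)
      = (volume.restrict S).prod (volume.restrict S) := by
    rw [Measure.prod_restrict, ← Measure.volume_eq_prod]
  -- p is integrable
  rw [hmeq] at hp hp0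
  have hp_int : Integrable p ((volume.restrict S).prod (volume.restrict S)) :=
    hp.integrable one_le_two
  -- the kernel integrand is integrable on the product
  obtain ⟨M, hM⟩ : ∃ M, ∀ x ∈ Set.Icc (0:ℝ) 1, ‖n x‖ ≤ M :=
    isCompact_Icc.exists_bound_of_continuousOn hnc
  have hcn_aesm : AEStronglyMeasurable (fun y => chi α y * n y) (volume.restrict S) :=
    hchi_aesm.mul ((hnc.mono hIcc).aestronglyMeasurable measurableSet_Ioo)
  have hcn_bd : ∀ᵐ y ∂(volume.restrict S), ‖chi α y * n y‖ ≤ M := by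
    filter_upwards [ae_restrict_mem measurableSet_Ioo] with y hy
    calc ‖chi α y * n y‖ ≤ ‖chi α y‖ * ‖n y‖ := norm_mul_le _ _
    _ ≤ 1 * M := by
        have h1 := chi_abs_le_one α y
        have h2 := hM y (hIcc hy)
        have h0 : (0:ℝ) ≤ ‖n y‖ := norm_nonneg _
        nlinarith [norm_nonneg (chi α y)]
    _ = M := one_mul M
  have hK_int : Integrable (fun z : ℝ × ℝ => chi α z.2 * n z.2 * p z)
      ((volume.restrict S).prod (volume.restrict S)) := by
    refine hp_int.bdd_mul (c := M) ?_ ?_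
    · exact hcn_aesm.comp_quasiMeasurePreserving Measure.quasiMeasurePreserving_snd
    · exact Measure.quasiMeasurePreserving_snd.tendsto_ae.eventually hcn_bd
  -- Fubini: the total transfer equals I
  have hC_int : Integrable (fun x => ∫ y in S, chi α y * n y * p (x, y))
      (volume.restrict S) := hK_int.integral_prod_left
  have hfub : (∫ x in S, ∫ y in S, chi α y * n y * p (x, y)) = I := by
    have hswap := MeasureTheory.integral_integral_swap
      (f := fun x y => chi α y * n y * p (x, y))
      (μ := volume.restrict S) (ν := volume.restrict S) hK_int
    rw [hswap]
    have : ∀ y, (∫ x in S, chi α y * n y * p (x, y)) = chi α y * n y * ∫ x in S, p (x, y) := by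
      intro y
      exact integral_const_mul _ _
    rw [hIdef]
    calc (∫ y in S, ∫ x in S, chi α y * n y * p (x, y))
        = ∫ y in S, chi α y * n y * ∫ x in S, p (x, y) := by
          exact integral_congr_ae (Filter.Eventually.of_forall fun y => this y)
      _ = ∫ y in S, chi α y * n y := by
          refine integral_congr_ae ?_
          filter_upwards [hpnorm] with y hy
          rw [hy, mul_one]
  -- integrability of each term
  have hi1 : IntegrableOn (fun x => chi α x * (b * R - d) * n x) S := by
    have : (fun x => chi α x * (b * R - d) * n x)
        = fun x => (b * R - d) * (chi α x * n x) := by funext x; ring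
    rw [this]
    exact hchin_int.const_mul _
  have hi2 : IntegrableOn (fun x => μ * b * R * chi α x * n x) S := by
    have : (fun x => μ * b * R * chi α x * n x)
        = fun x => (μ * b * R) * (chi α x * n x) := by funext x; ring
    rw [this]
    exact hchin_int.const_mul _
  have hi3 : IntegrableOn (fun x => μ * b * R * ∫ y in S, chi α y * n y * p (x, y)) S :=
    hC_int.const_mul _
  have hi4 : IntegrableOn (fun x => v' x * n x + v x * n' x) S :=
    (((hv'c.mul hnc).add (hvc.mul hn'c)).integrableOn_Icc).mono_set hIcc
  have hi5 : IntegrableOn (fun x => m * g x) S := hg.const_mul _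
  -- values of the integrals
  have hv1' : (∫ x in S, chi α x * (b * R - d) * n x) = (b * R - d) * I := by
    have : (fun x => chi α x * (b * R - d) * n x)
        = fun x => (b * R - d) * (chi α x * n x) := by funext x; ring
    rw [this, integral_const_mul]
  have hv2' : (∫ x in S, μ * b * R * chi α x * n x) = μ * b * R * I := by
    have : (fun x => μ * b * R * chi α x * n x)
        = fun x => (μ * b * R) * (chi α x * n x) := by funext x; ring
    rw [this, integral_const_mul]
  have hv3' : (∫ x in S, μ * b * R * ∫ y in S, chi α y * n y * p (x, y)) = μ * b * R * I := by
    rw [integral_const_mul, hfub]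
  have hv4' : (∫ x in S, (v' x * n x + v x * n' x)) = 0 := by
    have hle : (0:ℝ) ≤ 1 := by norm_num
    have hcont : ContinuousOn (fun x => v x * n x) (Set.Icc 0 1) := hvc.mul hnc
    have hderiv : ∀ x ∈ Set.Ioo (0:ℝ) 1, HasDerivWithinAt (fun x => v x * n x)
        (v' x * n x + v x * n' x) (Set.Ioi x) x := by
      intro x hx
      have hmem : Set.Icc (0:ℝ) 1 ∈ nhds x := Icc_mem_nhds hx.1 hx.2
      exact (((hv x (hIcc hx)).hasDerivAt hmem).mul
        ((hn x (hIcc hx)).hasDerivAt hmem)).hasDerivWithinAt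
    have hint : IntervalIntegrable (fun x => v' x * n x + v x * n' x) volume 0 1 := by
      rw [intervalIntegrable_iff_integrableOn_Ioo_of_le hle]
      exact hi4
    have := intervalIntegral.integral_eq_sub_of_hasDeriv_right_of_le hle hcont hderiv hint
    rw [intervalIntegral.integral_of_le hle, MeasureTheory.integral_Ioc_eq_integral_Ioo] at this
    rw [this, hv1, hv0]
    ring
  have hgint0 : (∫ x in S, g x) = 0 := by
    have h1 := hac 1 (by norm_num)
    rw [hnb1, hnb0] at h1
    have : (∫ s in (0:ℝ)..1, g s) = 0 := by linarith
    rw [intervalIntegral.integral_of_le (by norm_num : (0:ℝ) ≤ 1),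
      MeasureTheory.integral_Ioc_eq_integral_Ioo] at this
    exact this
  have hv5' : (∫ x in S, m * g x) = 0 := by
    rw [integral_const_mul, hgint0, mul_zero]
  -- integrate the steady-state equation
  have hkey : (b * R - d) * I = 0 := by
    have hiAB : IntegrableOn
        (fun x => chi α x * (b * R - d) * n x - μ * b * R * chi α x * n x) S := hi1.sub hi2
    have hiABC : IntegrableOn
        (fun x => chi α x * (b * R - d) * n x - μ * b * R * chi α x * n x
          + μ * b * R * (∫ y in S, chi α y * n y * p (x, y))) S := hiAB.add hi3
    have hiABCD : IntegrableOn
        (fun x => chi α x * (b * R - d) * n x - μ * b * R * chi α x * n x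
          + μ * b * R * (∫ y in S, chi α y * n y * p (x, y))
          - (v' x * n x + v x * n' x)) S := hiABC.sub hi4
    have h0 : (∫ x in S, (chi α x * (b * R - d) * n x - μ * b * R * chi α x * n x
          + μ * b * R * (∫ y in S, chi α y * n y * p (x, y))
          - (v' x * n x + v x * n' x) + m * g x)) = 0 := by
      calc (∫ x in S, (chi α x * (b * R - d) * n x - μ * b * R * chi α x * n x
          + μ * b * R * (∫ y in S, chi α y * n y * p (x, y))
          - (v' x * n x + v x * n' x) + m * g x))
          = ∫ _x in S, (0:ℝ) := integral_congr_ae (hss_n.mono fun x hx => hx.symm)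
        _ = 0 := by simp
    rw [integral_add hiABCD hi5, integral_sub hiABC hi4,
      integral_add hiAB hi3, integral_sub hi1 hi2,
      hv1', hv2', hv3', hv4', hv5'] at h0
    linarith
  -- positivity of the limit biomass
  have hpos : 0 < (θ - η * (d / b)) / d := by
    apply div_pos _ hd
    have h1 : η * (d / b) < η * (θ / η) := by
      exact mul_lt_mul_of_pos_left hthresh hη
    have h2 : η * (θ / η) = θ := by field_simp
    linarith
  -- case analysis
  rcases mul_eq_zero.mp hkey with hcase | hI0
  · have hRd : R = d / b := by
      rw [eq_div_iff hb.ne']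
      linear_combination hcase
    refine ⟨hRd, ?_, hpos⟩
    rw [hRd] at hss_R
    have hbd : b * (d / b) = d := by field_simp
    rw [hbd] at hss_R
    have hdI : d * I = θ - η * (d / b) := by linarith
    rw [eq_div_iff hd.ne']
    linear_combination hdI
  · -- I = 0 leads to contradiction with n nontrivial
    exfalso
    -- χ·n vanishes a.e.
    have hnn_ae : 0 ≤ᵐ[volume.restrict S] fun x => chi α x * n x := by
      filter_upwards [ae_restrict_mem measurableSet_Ioo] with x hx
      exact mul_nonneg (chi_nonneg α x) (hnpos x (hIcc hx))
    have hzero_ae : (fun x => chi α x * n x) =ᵐ[volume.restrict S] 0 := by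
      refine (integral_eq_zero_iff_of_nonneg_ae hnn_ae hchin_int).mp ?_
      rw [← hIdef]; exact hI0
    -- n vanishes on (0, α)
    have hres : n =ᵐ[volume.restrict (Set.Ioo 0 α)] 0 := by
      have h' : (fun x => chi α x * n x) =ᵐ[volume.restrict (Set.Ioo 0 α)] 0 :=
        ae_restrict_of_ae_restrict_of_subset (Set.Ioo_subset_Ioo le_rfl hα1.le) hzero_ae
      filter_upwards [h', ae_restrict_mem measurableSet_Ioo] with x hx hmem
      have : chi α x = 1 := if_pos hmem.2
      simpa [this] using hx
    have hsubIcc : Set.Ioo (0:ℝ) α ⊆ Set.Icc 0 1 :=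
      fun x hx => ⟨hx.1.le, hx.2.le.trans hα1.le⟩
    have h2 : ∀ x ∈ Set.Ioo (0:ℝ) α, n x = 0 :=
      Measure.eqOn_Ioo_of_ae_eq volume hres (hnc.mono hsubIcc) continuousOn_const
    -- limits along the set Ioo 0 α
    have hlim : ∀ f : ℝ → ℝ, ContinuousOn f (Set.Icc 0 1) →
        (∀ x ∈ Set.Ioo (0:ℝ) α, f x = 0) → ∀ c ∈ Set.Icc (0:ℝ) α, f c = 0 := by
      intro f hf hf0 c hc
      have hc1 : c ∈ Set.Icc (0:ℝ) 1 := ⟨hc.1, hc.2.trans hα1.le⟩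
      have hcl : c ∈ closure (Set.Ioo (0:ℝ) α) := by
        rw [closure_Ioo hα0.ne]; exact hc
      haveI : (nhdsWithin c (Set.Ioo (0:ℝ) α)).NeBot :=
        mem_closure_iff_nhdsWithin_neBot.mp hcl
      have ht1 : Filter.Tendsto f (nhdsWithin c (Set.Ioo (0:ℝ) α)) (nhds (f c)) :=
        (hf c hc1).mono hsubIcc
      have ht2 : Filter.Tendsto f (nhdsWithin c (Set.Ioo (0:ℝ) α)) (nhds 0) := by
        refine Filter.Tendsto.congr' ?_ tendsto_const_nhds
        exact (Filter.eventuallyEq_of_mem self_mem_nhdsWithin fun y hy => (hf0 y hy).symm)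
      exact tendsto_nhds_unique ht1 ht2
    have hnα : n α = 0 := hlim n hnc h2 α ⟨hα0.le, le_rfl⟩
    -- n' vanishes on (0, α) and hence at α
    have h2' : ∀ x ∈ Set.Ioo (0:ℝ) α, n' x = 0 := by
      intro x hx
      have hx1 : x ∈ Set.Icc (0:ℝ) 1 := hsubIcc hx
      have hmem : Set.Icc (0:ℝ) 1 ∈ nhds x :=
        Icc_mem_nhds (lt_of_lt_of_le hx.1 le_rfl) (lt_of_lt_of_le hx.2 hα1.le)
      have hd1 : HasDerivAt n (n' x) x := (hn x hx1).hasDerivAt hmem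
      have hev : n =ᶠ[nhds x] fun _ => (0:ℝ) :=
        Filter.eventuallyEq_of_mem (isOpen_Ioo.mem_nhds hx) fun y hy => h2 y hy
      have hd2 : HasDerivAt n 0 x :=
        (hasDerivAt_const x (0:ℝ)).congr_of_eventuallyEq hev
      exact hd1.unique hd2
    have hn'α : n' α = 0 := hlim n' hn'c h2' α ⟨hα0.le, le_rfl⟩
    -- the nonlocal kernel term vanishes identically
    have hinner : ∀ x : ℝ, (∫ y in S, chi α y * n y * p (x, y)) = 0 := by
      intro x
      have : ∀ y ∈ S, chi α y * n y * p (x, y) = 0 := by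
        intro y hy
        by_cases hyα : y < α
        · rw [h2 y ⟨hy.1, hyα⟩]; ring
        · have : chi α y = 0 := if_neg hyα
          rw [this]; ring
      calc (∫ y in S, chi α y * n y * p (x, y)) = ∫ _y in S, (0:ℝ) :=
            setIntegral_congr_fun measurableSet_Ioo this
        _ = 0 := by simp
    -- steady state on (α, 1): m g = (v n)'
    have hss2 : ∀ᵐ x ∂volume.restrict (Set.Ioo α 1),
        m * g x = v' x * n x + v x * n' x := by
      have hsub : Set.Ioo α 1 ⊆ S := Set.Ioo_subset_Ioo hα0.le le_rfl
      filter_upwards [ae_restrict_of_ae_restrict_of_subset hsub hss_n,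
        ae_restrict_mem measurableSet_Ioo] with x hx hmem
      have hchix : chi α x = 0 := if_neg (not_lt.mpr hmem.1.le)
      rw [hchix, hinner x] at hx
      linear_combination -hx
    have hss2' : ∀ᵐ x ∂(volume : Measure ℝ), x ∈ Set.Ioo α 1 →
        m * g x = v' x * n x + v x * n' x :=
      (ae_restrict_iff' measurableSet_Ioo).mp hss2
    have hne1 : ∀ᵐ x ∂(volume : Measure ℝ), x ≠ 1 := by
      refine ae_iff.mpr ?_
      have : {x : ℝ | ¬ x ≠ 1} = {1} := by ext x; simp
      rw [this]
      exact Real.volume_singleton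
    -- interval integrabilities
    have hg_ii : IntervalIntegrable g volume 0 1 := by
      rw [intervalIntegrable_iff_integrableOn_Ioo_of_le (by norm_num : (0:ℝ) ≤ 1)]
      exact hg
    have hvn_ii : IntervalIntegrable (fun x => v' x * n x + v x * n' x) volume 0 1 := by
      rw [intervalIntegrable_iff_integrableOn_Ioo_of_le (by norm_num : (0:ℝ) ≤ 1)]
      exact hi4
    -- the ODE n' = v n / m on [α, 1]
    have hODE : ∀ x ∈ Set.Icc α 1, n' x = v x * n x / m := by
      intro x hx
      have hx1 : x ∈ Set.Icc (0:ℝ) 1 := ⟨hα0.le.trans hx.1, hx.2⟩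
      have huIcc0 : Set.uIcc (0:ℝ) α ⊆ Set.uIcc (0:ℝ) 1 := by
        rw [Set.uIcc_of_le hα0.le, Set.uIcc_of_le (by norm_num : (0:ℝ) ≤ 1)]
        exact Set.Icc_subset_Icc le_rfl hα1.le
      have huIccα : Set.uIcc α x ⊆ Set.uIcc (0:ℝ) 1 := by
        rw [Set.uIcc_of_le hx.1, Set.uIcc_of_le (by norm_num : (0:ℝ) ≤ 1)]
        exact Set.Icc_subset_Icc hα0.le hx.2
      have hgα : IntervalIntegrable g volume 0 α := hg_ii.mono_set huIcc0
      have hgx : IntervalIntegrable g volume α x := hg_ii.mono_set huIccα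
      -- n' x = ∫_α^x g
      have hsplit : n' x = ∫ s in α..x, g s := by
        have e1 := hac x hx1
        have e2 := hac α ⟨hα0.le, hα1.le⟩
        rw [hn'α] at e2
        have := intervalIntegral.integral_add_adjacent_intervals hgα hgx
        rw [← this] at e1
        linarith
      -- FTC for v n on [α, x]
      have hfa : (∫ s in α..x, (v' s * n s + v s * n' s)) = v x * n x := by
        have hcont : ContinuousOn (fun s => v s * n s) (Set.Icc α x) :=
          (hvc.mul hnc).mono (Set.Icc_subset_Icc hα0.le hx.2)
        have hderiv : ∀ s ∈ Set.Ioo α x, HasDerivWithinAt (fun s => v s * n s)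
            (v' s * n s + v s * n' s) (Set.Ioi s) s := by
          intro s hs
          have hs1 : s ∈ Set.Icc (0:ℝ) 1 := ⟨(hα0.trans hs.1).le, hs.2.le.trans hx.2⟩
          have hmem : Set.Icc (0:ℝ) 1 ∈ nhds s :=
            Icc_mem_nhds (hα0.trans hs.1) (lt_of_lt_of_le hs.2 hx.2)
          exact (((hv s hs1).hasDerivAt hmem).mul
            ((hn s hs1).hasDerivAt hmem)).hasDerivWithinAt
        have := intervalIntegral.integral_eq_sub_of_hasDeriv_right_of_le hx.1 hcont hderiv
          (hvn_ii.mono_set huIccα)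
        rw [this, hnα]
        ring
      -- combine
      have hcongr : (∫ s in α..x, m * g s) = ∫ s in α..x, (v' s * n s + v s * n' s) := by
        refine intervalIntegral.integral_congr_ae ?_
        filter_upwards [hss2', hne1] with s h1 hne hmem
        rw [Set.uIoc_of_le hx.1] at hmem
        exact h1 ⟨hmem.1, lt_of_le_of_ne (hmem.2.trans hx.2) hne⟩
      rw [intervalIntegral.integral_const_mul, hfa] at hcongr
      rw [hsplit, eq_div_iff hm.ne']
      linear_combination hcongr
    -- Gronwall: n ≡ 0 on [α, 1]
    obtain ⟨Mv, hMv⟩ : ∃ Mv, ∀ x ∈ Set.Icc (0:ℝ) 1, ‖v x‖ ≤ Mv :=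
      isCompact_Icc.exists_bound_of_continuousOn hvc
    have hzero : ∀ x ∈ Set.Icc α 1, ‖n x‖ ≤ gronwallBound 0 (Mv/m) 0 (x - α) := by
      refine norm_le_gronwallBound_of_norm_deriv_right_le (f' := n')
        (hnc.mono (Set.Icc_subset_Icc hα0.le le_rfl)) ?_ (by simp [hnα]) ?_
      · intro x hx
        have hx1 : x ∈ Set.Icc (0:ℝ) 1 := ⟨hα0.le.trans hx.1, hx.2.le⟩
        refine (hn x hx1).mono_of_mem_nhdsWithin ?_
        refine mem_nhdsWithin.mpr ⟨Set.Iio 1, isOpen_Iio, hx.2, ?_⟩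
        rintro y ⟨hy1, hy2⟩
        exact ⟨(hα0.le.trans hx.1).trans hy2, hy1.le⟩
      · intro x hx
        have hx1 : x ∈ Set.Icc (0:ℝ) 1 := ⟨hα0.le.trans hx.1, hx.2.le⟩
        rw [hODE x ⟨hx.1, hx.2.le⟩]
        have h1 : ‖v x * n x / m‖ = ‖v x‖ * ‖n x‖ / m := by
          rw [norm_div, norm_mul, Real.norm_of_nonneg hm.le]
        rw [h1]
        have hb1 : ‖v x‖ * ‖n x‖ / m ≤ Mv * ‖n x‖ / m := by
          gcongr
          exact hMv x hx1
        calc ‖v x‖ * ‖n x‖ / m ≤ Mv * ‖n x‖ / m := hb1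
          _ = Mv / m * ‖n x‖ + 0 := by ring
    have hnzero2 : ∀ x ∈ Set.Icc α 1, n x = 0 := by
      intro x hx
      have h := hzero x hx
      rw [gronwallBound_ε0_δ0] at h
      have h0 : ‖n x‖ = 0 := le_antisymm h (norm_nonneg _)
      simpa using h0
    obtain ⟨x, hx, hxne⟩ := hnnz
    rcases le_or_gt x α with hle | hlt
    · exact hxne (hlim n hnc h2 x ⟨hx.1, hle⟩)
    · exact hxne (hnzero2 x ⟨hlt.le, hx.2⟩)
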